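/- arXiv:1310.6091 — 2 statements merged into one kernel-verified Lean document; each statement's English description precedes it below -/
import Mathlib

section
/- If a connected graph G admits a weak IASI and G is not bipartite, then G has at least one edge uv with |f(u)|=|f(v)|=1 (a mono-indexed edge). -/
/-!
By Cauchy–Davenport, `|A + B| ≥ |A| + |B| - 1` for nonempty finite sets of naturals, so
`|A + B| = max |A| |B|` forces `A` or `B` to be a singleton: every edge of a weak IASI has a
singleton-labelled endpoint. If no edge had two, the singleton-labelled vertices and the others
would split `G` into two independent sets, i.e. `G` would be bipartite.
-/

open scoped Pointwise

/-- An integer additive set-indexer (IASI) of a simple graph `G`: an injective labeling of the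
vertices by finite nonempty subsets of `ℕ` such that the induced sumset map on edges is
injective. -/
def IsIASI {V : Type*} (G : SimpleGraph V) (f : V → Finset ℕ) : Prop :=
  Function.Injective f ∧ (∀ v, (f v).Nonempty) ∧
    ∀ u v x y, G.Adj u v → G.Adj x y → f u + f v = f x + f y → s(u, v) = s(x, y)

/-- A weak IASI: an IASI in which every edge `uv` satisfies
`|f u + f v| = max |f u| |f v|`. -/
def IsWeakIASI {V : Type*} (G : SimpleGraph V) (f : V → Finset ℕ) : Prop :=
  IsIASI G f ∧ ∀ u v, G.Adj u v → (f u + f v).card = max (f u).card (f v).card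

open Finset

lemma Finset.card_eq_one_or_card_eq_one_of_card_add_eq_max {α : Type*}
    [LinearOrder α] [Add α] [IsCancelAdd α] [AddLeftMono α] [AddRightMono α]
    {s t : Finset α} (hs : s.Nonempty) (ht : t.Nonempty) (h : #(s + t) = max #s #t) :
    #s = 1 ∨ #t = 1 := by
  have hcd := cauchy_davenport_add_of_linearOrder_isCancelAdd hs ht
  rw [h] at hcd
  have := hs.card_pos
  have := ht.card_pos
  omega

lemma SimpleGraph.isBipartite_of_forall_adj_xor {V : Type*} {G : SimpleGraph V} (p : V → Prop)
    (h : ∀ ⦃v w⦄, G.Adj v w → Xor (p v) (p w)) : G.IsBipartite :=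
  IsBipartiteWith.isBipartite (s := {v | p v}) (t := {v | ¬ p v})
    ⟨disjoint_compl_right, fun v w hvw => by
      rcases h hvw with ⟨hv, hw⟩ | ⟨hw, hv⟩
      · exact Or.inl ⟨hv, hw⟩
      · exact Or.inr ⟨hv, hw⟩⟩

theorem weakIASI_not_bipartite_mono_edge_general {V : Type*} (G : SimpleGraph V)
    (hbip : ¬ G.Colorable 2)
    (f : V → Finset ℕ) (hf : IsWeakIASI G f) :
    ∃ u v, G.Adj u v ∧ (f u).card = 1 ∧ (f v).card = 1 := by
  obtain ⟨⟨-, hne, -⟩, hweak⟩ := hf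
  by_contra! hmono
  refine hbip (G.isBipartite_of_forall_adj_xor (fun v => #(f v) = 1) fun u v huv => ?_)
  rcases card_eq_one_or_card_eq_one_of_card_add_eq_max (hne u) (hne v) (hweak u v huv) with hu | hv
  · exact Or.inl ⟨hu, hmono u v huv hu⟩
  · exact Or.inr ⟨hv, fun hu => hmono u v huv hu hv⟩

/-- If a connected graph `G` admits a weak IASI and `G` is not bipartite, then `G` has at
least one mono-indexed edge, i.e., an edge both of whose endpoints receive singleton labels. -/
theorem weakIASI_not_bipartite_mono_edge {V : Type*} (G : SimpleGraph V)
    (hconn : G.Connected) (hbip : ¬ G.Colorable 2)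
    (f : V → Finset ℕ) (hf : IsWeakIASI G f) :
    ∃ u v, G.Adj u v ∧ (f u).card = 1 ∧ (f v).card = 1 :=
  weakIASI_not_bipartite_mono_edge_general G hbip f hf
end

section
/- Under a weak IASI, the set of vertices whose set-labels have cardinality at least 2 forms an independent set in the graph. -/
open scoped Pointwise

theorem Finset.max_card_lt_card_add {α : Type*} [LinearOrder α] [AddSemigroup α]
    [IsCancelAdd α] [AddLeftMono α] [AddRightMono α] {A B : Finset α}
    (hA : 2 ≤ A.card) (hB : 2 ≤ B.card) : max A.card B.card < (A + B).card := by
  have hA₀ : A.Nonempty := Finset.card_pos.mp (by omega)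
  have hB₀ : B.Nonempty := Finset.card_pos.mp (by omega)
  have hsum := cauchy_davenport_add_of_linearOrder_isCancelAdd hA₀ hB₀
  omega

/-- Under a weak IASI, the set of vertices whose set-labels have cardinality at least `2`
forms an independent set in the graph. -/
theorem weakIASI_nonsingleton_indep {V : Type*} (G : SimpleGraph V)
    (f : V → Finset ℕ) (hf : IsWeakIASI G f) :
    ∀ u ∈ {v | 2 ≤ (f v).card}, ∀ w ∈ {v | 2 ≤ (f v).card}, ¬ G.Adj u w := by
  intro u hu w hw hadj
  have hcard := hf.2 u w hadj
  have hlt := Finset.max_card_lt_card_add (A := f u) (B := f w) hu hw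
  omega
end
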